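/- The G-orbits of x₁ := (0,E₁₂), x₂ := (0,I₂), x₃ := (E₁₁,E₁₂), x₄ := (E₁₂,E₂₂), x₅ := (E₁₂,I₂) have cardinalities (q+1)³(q−1), q(q²−1)², q(q²−1)², q(q²−1)², and q(q²−1)³ respectively, and the stabilizers in G of these five points have cardinalities q³(q−1)⁵, q²(q−1)³(q²−1), q²(q−1)³(q²−1), q²(q−1)³(q²−1), and q²(q−1)³ respectively (here Eᵢⱼ denotes the 2×2 matrix unit and I₂ the identity matrix). -/

import Mathlib

open Matrix

/-- `2 × 2` matrices over `F`. -/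
abbrev M2 (F : Type*) := Matrix (Fin 2) (Fin 2) F

/-- The right action of `G = GL₂(F) × GL₂(F) × GL₂(F)` on `V = M₂(F) × M₂(F)`. -/
noncomputable def act {F : Type*} [Field F] (v : M2 F × M2 F)
    (g : GL (Fin 2) F × GL (Fin 2) F × GL (Fin 2) F) : M2 F × M2 F :=
  ((((g.2.2 : M2 F) 0 0) • (((g.1⁻¹ : GL (Fin 2) F) : M2 F) * v.1 * (g.2.1 : M2 F)) +
      ((g.2.2 : M2 F) 1 0) • (((g.1⁻¹ : GL (Fin 2) F) : M2 F) * v.2 * (g.2.1 : M2 F))),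
   (((g.2.2 : M2 F) 0 1) • (((g.1⁻¹ : GL (Fin 2) F) : M2 F) * v.1 * (g.2.1 : M2 F)) +
      ((g.2.2 : M2 F) 1 1) • (((g.1⁻¹ : GL (Fin 2) F) : M2 F) * v.2 * (g.2.1 : M2 F))))

/-- The `G`-orbit of a point of `V`. -/
noncomputable def orbit {F : Type*} [Field F] (v : M2 F × M2 F) : Set (M2 F × M2 F) :=
  {w | ∃ g : GL (Fin 2) F × GL (Fin 2) F × GL (Fin 2) F, act v g = w}

/-- The stabilizer of a point of `V` in `G`. -/
noncomputable def stab {F : Type*} [Field F] (v : M2 F × M2 F) :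
    Set (GL (Fin 2) F × GL (Fin 2) F × GL (Fin 2) F) :=
  {g | act v g = v}

/-!
Since `act` is a right action, the orbit–stabilizer theorem gives `|orbit x| · |stab x| = |G|`
with `|G| = (q (q - 1)² (q + 1))³`, so everything reduces to counting stabilizers. For
`g = (h, k, a)` and each of the five points, the equation `act x g = x` forces some of `h, k, a`
into the upper triangular subgroup `B ≃ Fˣ × F × Fˣ` and determines the rest, giving
`stab x₁ ≃ F × Fˣ × B × B`, `stab x₂ ≃ GL₂ × B`, `stab x₃ ≃ B × GL₂`, `stab x₄ ≃ B × GL₂` and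
`stab x₅ ≃ F × Fˣ × B`.
-/

section

local notation "𝔾" F:max => GL (Fin 2) F × GL (Fin 2) F × GL (Fin 2) F

variable {F : Type*} [Field F]

section Action

lemma act_one (v : M2 F × M2 F) : act v 1 = v := by
  simp [act, one_apply]

lemma act_mul (v : M2 F × M2 F) (g h : 𝔾 F) : act v (g * h) = act (act v g) h := by
  ext i j <;>
  · simp [act, Prod.mul_def, mul_apply, Fin.sum_univ_two]
    ring

noncomputable instance : MulAction (𝔾 F)ᵐᵒᵖ (M2 F × M2 F) where
  smul g v := act v g.unop
  one_smul := act_one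
  mul_smul g h v := act_mul v h.unop g.unop

lemma orbit_eq_orbit_op (v : M2 F × M2 F) : orbit v = MulAction.orbit (𝔾 F)ᵐᵒᵖ v := by
  ext w
  simp only [orbit, Set.mem_ofPred_eq, MulAction.mem_orbit_iff, MulOpposite.op_surjective.exists]
  rfl

lemma card_stab_eq_card_stabilizer_op (v : M2 F × M2 F) :
    Nat.card (stab v) = Nat.card (MulAction.stabilizer (𝔾 F)ᵐᵒᵖ v) :=
  Nat.card_congr (MulOpposite.opEquiv.subtypeEquiv fun _ => Iff.rfl)

theorem card_orbit_mul_card_stab (v : M2 F × M2 F) :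
    Nat.card (orbit v) * Nat.card (stab v) = Nat.card (𝔾 F) := by
  rw [orbit_eq_orbit_op, card_stab_eq_card_stabilizer_op, ← Nat.card_prod]
  exact Nat.card_congr ((MulAction.orbitProdStabilizerEquivGroup _ v).trans
    MulOpposite.opEquiv.symm)

lemma card_orbit_eq_of_mul_card_stab [Finite F] (v : M2 F × M2 F) {n : ℕ}
    (h : n * Nat.card (stab v) = Nat.card (𝔾 F)) :
    Nat.card (orbit v) = n := by
  have : Nonempty (stab v) := ⟨⟨1, act_one v⟩⟩
  exact Nat.eq_of_mul_eq_mul_right Nat.card_pos ((card_orbit_mul_card_stab v).trans h.symm)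

end Action

section UpperTriangular

lemma det_ne_zero_fin_two (g : GL (Fin 2) F) :
    (g : M2 F) 0 0 * (g : M2 F) 1 1 - (g : M2 F) 0 1 * (g : M2 F) 1 0 ≠ 0 :=
  det_fin_two (g : M2 F) ▸ g.det_ne_zero

def upperGL (p : Fˣ × F × Fˣ) : GL (Fin 2) F :=
  GeneralLinearGroup.mkOfDetNeZero !![(p.1 : F), p.2.1; 0, p.2.2] (by simp [det_fin_two_of])

@[simp] lemma coe_upperGL (p : Fˣ × F × Fˣ) :
    (upperGL p : M2 F) = !![(p.1 : F), p.2.1; 0, p.2.2] :=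
  rfl

lemma upperGL_injective : Function.Injective (upperGL (F := F)) := by
  intro p p' hp
  have entry (i j : Fin 2) := congrArg (fun g : GL (Fin 2) F => (g : M2 F) i j) hp
  ext
  · simpa using entry 0 0
  · simpa using entry 0 1
  · simpa using entry 1 1

lemma exists_upperGL_eq {g : GL (Fin 2) F} (hg : (g : M2 F) 1 0 = 0) : ∃ p, upperGL p = g := by
  have hdet := det_ne_zero_fin_two g
  rw [hg, mul_zero, sub_zero] at hdet
  refine ⟨(Units.mk0 _ (left_ne_zero_of_mul hdet), (g : M2 F) 0 1,
    Units.mk0 _ (right_ne_zero_of_mul hdet)), Units.ext ?_⟩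
  rw [coe_upperGL, Units.val_mk0, Units.val_mk0, ← hg, ← eta_fin_two]

end UpperTriangular

section Stabilizers

lemma mem_stab_iff (v : M2 F × M2 F) (g : 𝔾 F) :
    g ∈ stab v ↔
      ((g.2.2 : M2 F) 0 0 • v.1 + (g.2.2 : M2 F) 1 0 • v.2) * g.2.1 = g.1 * v.1 ∧
      ((g.2.2 : M2 F) 0 1 • v.1 + (g.2.2 : M2 F) 1 1 • v.2) * g.2.1 = g.1 * v.2 := by
  simp only [stab, Set.mem_ofPred_eq, act, Prod.ext_iff, mul_assoc, ← mul_smul_comm, ← mul_add,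
    Units.inv_mul_eq_iff_eq_mul, add_mul, smul_mul_assoc]

variable (h k a : GL (Fin 2) F)

lemma mem_stab_zero_E12_iff :
    (h, k, a) ∈ stab ((0 : M2 F), !![0, 1; 0, 0]) ↔
      (a : M2 F) 1 0 = 0 ∧ (h : M2 F) 1 0 = 0 ∧ (k : M2 F) 1 0 = 0 ∧
        (h : M2 F) 0 0 = (a : M2 F) 1 1 * (k : M2 F) 1 1 := by
  simp only [mem_stab_iff, smul_zero, smul_of, smul_cons, smul_eq_mul, mul_zero, mul_one,
    smul_empty, zero_add, Units.mul_left_eq_zero, ← ext_iff, of_apply, cons_val',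
    cons_val_fin_one, Matrix.zero_apply, Fin.forall_fin_two, cons_val_zero, cons_val_one,
    true_and, and_self, and_true, mul_apply, Fin.sum_univ_two, add_zero, zero_mul, mul_eq_zero,
    and_congr_right_iff]
  grind [det_ne_zero_fin_two]

lemma mem_stab_zero_one_iff :
    (h, k, a) ∈ stab ((0 : M2 F), 1) ↔
      (a : M2 F) 1 0 = 0 ∧ (h : M2 F) = (a : M2 F) 1 1 • k := by
  simp [mem_stab_iff, smul_eq_zero, k.ne_zero, @eq_comm (M2 F) _ (h : M2 F)]

lemma mem_stab_E11_E12_iff :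
    (h, k, a) ∈ stab ((!![1, 0; 0, 0] : M2 F), !![0, 1; 0, 0]) ↔
      (h : M2 F) 1 0 = 0 ∧ (a : M2 F)ᵀ * k = (h : M2 F) 0 0 • 1 := by
  simp only [mem_stab_iff, smul_of, smul_cons, smul_eq_mul, mul_one, mul_zero, smul_empty,
    of_add_of, add_cons, head_cons, add_zero, tail_cons, zero_add, empty_add_empty, ← ext_iff,
    mul_apply, of_apply, cons_val', cons_val_fin_one, Fin.sum_univ_two, cons_val_zero,
    cons_val_one, Fin.forall_fin_two, zero_mul, and_true, true_and, transpose_apply,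
    Matrix.smul_apply, one_apply, mul_ite, ↓reduceIte, zero_ne_one, one_ne_zero]
  grind [det_ne_zero_fin_two]

lemma mem_stab_E12_E22_iff :
    (h, k, a) ∈ stab ((!![0, 1; 0, 0] : M2 F), !![0, 0; 0, 1]) ↔
      (k : M2 F) 1 0 = 0 ∧ (h : M2 F) = (k : M2 F) 1 1 • (a : M2 F) := by
  simp only [mem_stab_iff, smul_of, smul_cons, smul_eq_mul, mul_zero, mul_one, smul_empty,
    of_add_of, add_cons, head_cons, add_zero, tail_cons, empty_add_empty, zero_add, ← ext_iff,
    mul_apply, of_apply, cons_val', cons_val_fin_one, Fin.sum_univ_two, cons_val_zero,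
    cons_val_one, Fin.forall_fin_two, zero_mul, mul_eq_zero, Matrix.smul_apply]
  grind [det_ne_zero_fin_two]

lemma mem_stab_E12_one_iff :
    (h, k, a) ∈ stab ((!![0, 1; 0, 0] : M2 F), 1) ↔
      (a : M2 F) 1 0 = 0 ∧ (k : M2 F) 1 0 = 0 ∧ (h : M2 F) 1 0 = 0 ∧
      (h : M2 F) 0 0 = (a : M2 F) 1 1 * (k : M2 F) 0 0 ∧
      (h : M2 F) 0 1 = (a : M2 F) 0 1 * (k : M2 F) 1 1 + (a : M2 F) 1 1 * (k : M2 F) 0 1 ∧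
      (h : M2 F) 1 1 = (a : M2 F) 1 1 * (k : M2 F) 1 1 ∧
      (a : M2 F) 0 0 * (k : M2 F) 1 1 = (a : M2 F) 1 1 * (k : M2 F) 0 0 := by
  have dk := det_ne_zero_fin_two k
  have da := det_ne_zero_fin_two a
  simp only [mem_stab_iff, smul_of, smul_cons, smul_eq_mul, mul_zero, mul_one, smul_empty,
    ← ext_iff, mul_apply, Matrix.add_apply, of_apply, cons_val', cons_val_fin_one,
    Matrix.smul_apply, one_apply, mul_ite, Fin.sum_univ_two, cons_val_zero, cons_val_one,
    Fin.forall_fin_two, add_zero, ↓reduceIte, zero_add, zero_ne_one, one_ne_zero, zero_mul]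
  constructor
  · rintro ⟨⟨⟨e00, e01⟩, e10, e11⟩, ⟨f00, f01⟩, f10, f11⟩
    have hk10 : (k : M2 F) 1 0 = 0 := by
      by_contra hk
      have ha10 : (a : M2 F) 1 0 = 0 := (mul_eq_zero.mp e10).resolve_right hk
      have ha11 : (a : M2 F) 1 1 = 0 := by
        rw [ha10, zero_mul, ← f10] at e11
        exact (mul_eq_zero.mp e11.symm).resolve_right hk
      exact da (by rw [ha10, ha11]; ring)
    have hk00 : (k : M2 F) 0 0 ≠ 0 := fun h0 => dk (by rw [h0, hk10]; ring)
    have ha10 : (a : M2 F) 1 0 = 0 := by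
      rw [hk10, mul_zero, add_zero] at e00
      exact (mul_eq_zero.mp e00).resolve_right hk00
    grind
  · grind

end Stabilizers

section Counting

lemma card_GL_fin_two_of_card_eq_succ [Fintype F] {u : ℕ} (hu : Fintype.card F = u + 1) :
    Nat.card (GL (Fin 2) F) = u * (u + 2) * ((u + 1) * u) := by
  have hsq : (u + 1) ^ 2 - 1 = u * (u + 2) := Nat.sub_eq_of_eq_add (by ring)
  have hsq' : (u + 1) ^ 2 - (u + 1) = (u + 1) * u := Nat.sub_eq_of_eq_add (by ring)
  rw [card_GL_field, Fin.prod_univ_two, hu]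
  simp only [Fin.val_zero, Fin.val_one, pow_zero, pow_one, hsq, hsq']

lemma card_stab_zero_E12 :
    Nat.card (stab ((0 : M2 F), !![0, 1; 0, 0])) =
      Nat.card ((F × Fˣ) × (Fˣ × F × Fˣ) × (Fˣ × F × Fˣ)) := by
  let f : (F × Fˣ) × (Fˣ × F × Fˣ) × (Fˣ × F × Fˣ) → 𝔾 F :=
    fun ⟨x, k, a⟩ => (upperGL (a.2.2 * k.2.2, x), upperGL k, upperGL a)
  have hf : f.Injective := by
    rintro ⟨x, k, a⟩ ⟨x', k', a'⟩ h
    simp only [f, Prod.mk.injEq, upperGL_injective.eq_iff] at h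
    obtain ⟨⟨-, rfl⟩, rfl, rfl⟩ := h
    rfl
  have hrange : Set.range f = stab ((0 : M2 F), !![0, 1; 0, 0]) := by
    ext ⟨h, k, a⟩
    rw [mem_stab_zero_E12_iff]
    constructor
    · rintro ⟨⟨x, k, a⟩, ⟨⟩⟩
      simp
    · rintro ⟨ha, hh, hk, hdiag⟩
      obtain ⟨a, rfl⟩ := exists_upperGL_eq ha
      obtain ⟨k, rfl⟩ := exists_upperGL_eq hk
      obtain ⟨h, rfl⟩ := exists_upperGL_eq hh
      refine ⟨(h.2, k, a), ?_⟩
      have h1 : a.2.2 * k.2.2 = h.1 := Units.ext (by simpa using hdiag.symm)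
      simp [f, h1]
  rw [← hrange, Nat.card_range_of_injective hf]

lemma card_stab_zero_one :
    Nat.card (stab ((0 : M2 F), (1 : M2 F))) = Nat.card (GL (Fin 2) F × (Fˣ × F × Fˣ)) := by
  let f : GL (Fin 2) F × (Fˣ × F × Fˣ) → 𝔾 F :=
    fun ⟨k, a⟩ => (a.2.2 • k, k, upperGL a)
  have hf : f.Injective := by
    rintro ⟨k, a⟩ ⟨k', a'⟩ h
    simp only [f, Prod.mk.injEq, upperGL_injective.eq_iff] at h
    obtain ⟨-, rfl, rfl⟩ := h
    rfl
  have hrange : Set.range f = stab ((0 : M2 F), (1 : M2 F)) := by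
    ext ⟨h, k, a⟩
    rw [mem_stab_zero_one_iff]
    constructor
    · rintro ⟨⟨k, a⟩, ⟨⟩⟩
      simp [Units.smul_def]
    · rintro ⟨ha, hh⟩
      obtain ⟨a, rfl⟩ := exists_upperGL_eq ha
      refine ⟨(k, a), ?_⟩
      simp only [f, Prod.mk.injEq, and_true]
      exact Units.ext (by simpa [Units.smul_def] using hh.symm)
  rw [← hrange, Nat.card_range_of_injective hf]

lemma card_stab_E11_E12 :
    Nat.card (stab ((!![1, 0; 0, 0] : M2 F), !![0, 1; 0, 0])) =
      Nat.card ((Fˣ × F × Fˣ) × GL (Fin 2) F) := by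
  let f : (Fˣ × F × Fˣ) × GL (Fin 2) F → 𝔾 F :=
    fun ⟨h, k⟩ => (upperGL h, k,
      GeneralLinearGroup.mkOfDetNeZero ((h.1 : F) • (↑k⁻¹ : M2 F)ᵀ)
        (by simp [k.det_ne_zero]))
  have hf : f.Injective := by
    rintro ⟨h, k⟩ ⟨h', k'⟩ e
    simp only [f, Prod.mk.injEq, upperGL_injective.eq_iff] at e
    obtain ⟨rfl, rfl, -⟩ := e
    rfl
  have hrange : Set.range f = stab ((!![1, 0; 0, 0] : M2 F), !![0, 1; 0, 0]) := by
    ext ⟨h, k, a⟩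
    rw [mem_stab_E11_E12_iff]
    constructor
    · rintro ⟨⟨h, k⟩, ⟨⟩⟩
      simp
    · rintro ⟨hh, hak⟩
      obtain ⟨h, rfl⟩ := exists_upperGL_eq hh
      refine ⟨(h, k), ?_⟩
      simp only [f, Prod.mk.injEq, true_and]
      refine Units.ext ?_
      rw [← Units.eq_mul_inv_iff_mul_eq] at hak
      rw [GeneralLinearGroup.val_mkOfDetNeZero, ← transpose_transpose (a : M2 F), hak]
      simp
  rw [← hrange, Nat.card_range_of_injective hf]

lemma card_stab_E12_E22 :
    Nat.card (stab ((!![0, 1; 0, 0] : M2 F), !![0, 0; 0, 1])) =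
      Nat.card ((Fˣ × F × Fˣ) × GL (Fin 2) F) := by
  let f : (Fˣ × F × Fˣ) × GL (Fin 2) F → 𝔾 F :=
    fun ⟨k, a⟩ => (k.2.2 • a, upperGL k, a)
  have hf : f.Injective := by
    rintro ⟨k, a⟩ ⟨k', a'⟩ h
    simp only [f, Prod.mk.injEq, upperGL_injective.eq_iff] at h
    obtain ⟨-, rfl, rfl⟩ := h
    rfl
  have hrange : Set.range f = stab ((!![0, 1; 0, 0] : M2 F), !![0, 0; 0, 1]) := by
    ext ⟨h, k, a⟩
    rw [mem_stab_E12_E22_iff]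
    constructor
    · rintro ⟨⟨k, a⟩, ⟨⟩⟩
      simp [Units.smul_def]
    · rintro ⟨hk, hh⟩
      obtain ⟨k, rfl⟩ := exists_upperGL_eq hk
      refine ⟨(k, a), ?_⟩
      simp only [f, Prod.mk.injEq, and_true]
      exact Units.ext (by simpa [Units.smul_def] using hh.symm)
  rw [← hrange, Nat.card_range_of_injective hf]

lemma card_stab_E12_one :
    Nat.card (stab ((!![0, 1; 0, 0] : M2 F), (1 : M2 F))) =
      Nat.card ((F × Fˣ) × (Fˣ × F × Fˣ)) := by
  let f : (F × Fˣ) × (Fˣ × F × Fˣ) → 𝔾 F :=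
    fun ⟨⟨b, d⟩, k⟩ => (upperGL (d * k.1, b * k.2.2 + d * k.2.1, d * k.2.2), upperGL k,
      upperGL (d * k.1 * k.2.2⁻¹, b, d))
  have hf : f.Injective := by
    rintro ⟨⟨b, d⟩, k⟩ ⟨⟨b', d'⟩, k'⟩ h
    simp only [f, Prod.mk.injEq, upperGL_injective.eq_iff] at h
    obtain ⟨-, rfl, -, rfl, rfl⟩ := h
    rfl
  have hrange : Set.range f = stab ((!![0, 1; 0, 0] : M2 F), (1 : M2 F)) := by
    ext ⟨h, k, a⟩
    rw [mem_stab_E12_one_iff]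
    constructor
    · rintro ⟨⟨⟨b, d⟩, k⟩, ⟨⟩⟩
      simp
    · rintro ⟨ha, hk, hh, hh00, hh01, hh11, hcomm⟩
      obtain ⟨a, rfl⟩ := exists_upperGL_eq ha
      obtain ⟨k, rfl⟩ := exists_upperGL_eq hk
      obtain ⟨h, rfl⟩ := exists_upperGL_eq hh
      refine ⟨(⟨a.2.1, a.2.2⟩, k), ?_⟩
      simp only [coe_upperGL, of_apply, cons_val', cons_val_zero, cons_val_one, cons_val_fin_one]
        at hh00 hh01 hh11 hcomm
      have h00 : a.2.2 * k.1 = h.1 := Units.ext hh00.symm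
      have h11 : a.2.2 * k.2.2 = h.2.2 := Units.ext hh11.symm
      have a00 : a.2.2 * k.1 * k.2.2⁻¹ = a.1 := mul_inv_eq_iff_eq_mul.mpr (Units.ext hcomm.symm)
      simp only [f]
      rw [a00, h00, h11, ← hh01]
  rw [← hrange, Nat.card_range_of_injective hf]

end Counting

end

theorem stmt13_general (F : Type*) [Field F] [Fintype F] (q : ℕ)
    (hq : Fintype.card F = q) :
    (Nat.card (orbit ((0 : M2 F), !![0, 1; 0, 0])) = (q + 1) ^ 3 * (q - 1) ∧
      Nat.card (orbit ((0 : M2 F), (1 : M2 F))) = q * (q ^ 2 - 1) ^ 2 ∧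
      Nat.card (orbit ((!![1, 0; 0, 0] : M2 F), !![0, 1; 0, 0])) = q * (q ^ 2 - 1) ^ 2 ∧
      Nat.card (orbit ((!![0, 1; 0, 0] : M2 F), !![0, 0; 0, 1])) = q * (q ^ 2 - 1) ^ 2 ∧
      Nat.card (orbit ((!![0, 1; 0, 0] : M2 F), (1 : M2 F))) = q * (q ^ 2 - 1) ^ 3) ∧
    (Nat.card (stab ((0 : M2 F), !![0, 1; 0, 0])) = q ^ 3 * (q - 1) ^ 5 ∧
      Nat.card (stab ((0 : M2 F), (1 : M2 F))) = q ^ 2 * (q - 1) ^ 3 * (q ^ 2 - 1) ∧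
      Nat.card (stab ((!![1, 0; 0, 0] : M2 F), !![0, 1; 0, 0])) =
        q ^ 2 * (q - 1) ^ 3 * (q ^ 2 - 1) ∧
      Nat.card (stab ((!![0, 1; 0, 0] : M2 F), !![0, 0; 0, 1])) =
        q ^ 2 * (q - 1) ^ 3 * (q ^ 2 - 1) ∧
      Nat.card (stab ((!![0, 1; 0, 0] : M2 F), (1 : M2 F))) = q ^ 2 * (q - 1) ^ 3) := by
  obtain ⟨u, rfl⟩ : ∃ u, q = u + 1 := ⟨q - 1, by grind [Fintype.card_pos (α := F)]⟩
  have hF : Nat.card F = u + 1 := by rw [Nat.card_eq_fintype_card, hq]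
  have hU : Nat.card Fˣ = u := by rw [Nat.card_units, hF, add_tsub_cancel_right]
  have hsq : (u + 1) ^ 2 - 1 = u * (u + 2) := Nat.sub_eq_of_eq_add (by ring)
  have hGL := card_GL_fin_two_of_card_eq_succ hq
  have hG : Nat.card (GL (Fin 2) F × GL (Fin 2) F × GL (Fin 2) F) =
      (u * (u + 2) * ((u + 1) * u)) ^ 3 := by
    rw [Nat.card_prod, Nat.card_prod, hGL]; ring
  have s₁ := card_stab_zero_E12 (F := F)
  have s₂ := card_stab_zero_one (F := F)
  have s₃ := card_stab_E11_E12 (F := F)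
  have s₄ := card_stab_E12_E22 (F := F)
  have s₅ := card_stab_E12_one (F := F)
  simp only [Nat.card_prod, hF, hU, hGL] at s₁ s₂ s₃ s₄ s₅
  simp only [add_tsub_cancel_right, hsq]
  refine ⟨⟨card_orbit_eq_of_mul_card_stab _ ?_, card_orbit_eq_of_mul_card_stab _ ?_,
    card_orbit_eq_of_mul_card_stab _ ?_, card_orbit_eq_of_mul_card_stab _ ?_,
    card_orbit_eq_of_mul_card_stab _ ?_⟩, ?_, ?_, ?_, ?_, ?_⟩ <;>
  · simp only [hG, s₁, s₂, s₃, s₄, s₅]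
    ring

/-- over a finite field of odd cardinality `q`, the cardinalities of the
`G`-orbits of `x₁ = (0,E₁₂)`, `x₂ = (0,I₂)`, `x₃ = (E₁₁,E₁₂)`, `x₄ = (E₁₂,E₂₂)`,
`x₅ = (E₁₂,I₂)` and of the corresponding stabilizers in `G` are as listed. -/
theorem stmt13 (F : Type*) [Field F] [Fintype F] (q : ℕ)
    (hq : Fintype.card F = q) (hodd : Odd q) :
    (Nat.card (orbit ((0 : M2 F), !![0, 1; 0, 0])) = (q + 1) ^ 3 * (q - 1) ∧
      Nat.card (orbit ((0 : M2 F), (1 : M2 F))) = q * (q ^ 2 - 1) ^ 2 ∧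
      Nat.card (orbit ((!![1, 0; 0, 0] : M2 F), !![0, 1; 0, 0])) = q * (q ^ 2 - 1) ^ 2 ∧
      Nat.card (orbit ((!![0, 1; 0, 0] : M2 F), !![0, 0; 0, 1])) = q * (q ^ 2 - 1) ^ 2 ∧
      Nat.card (orbit ((!![0, 1; 0, 0] : M2 F), (1 : M2 F))) = q * (q ^ 2 - 1) ^ 3) ∧
    (Nat.card (stab ((0 : M2 F), !![0, 1; 0, 0])) = q ^ 3 * (q - 1) ^ 5 ∧
      Nat.card (stab ((0 : M2 F), (1 : M2 F))) = q ^ 2 * (q - 1) ^ 3 * (q ^ 2 - 1) ∧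
      Nat.card (stab ((!![1, 0; 0, 0] : M2 F), !![0, 1; 0, 0])) =
        q ^ 2 * (q - 1) ^ 3 * (q ^ 2 - 1) ∧
      Nat.card (stab ((!![0, 1; 0, 0] : M2 F), !![0, 0; 0, 1])) =
        q ^ 2 * (q - 1) ^ 3 * (q ^ 2 - 1) ∧
      Nat.card (stab ((!![0, 1; 0, 0] : M2 F), (1 : M2 F))) = q ^ 2 * (q - 1) ^ 3) :=
  stmt13_general F q hq
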